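/- Almost sure convergence of the empirical cumulative residual entropy: limsup_{n→∞} |𝒞ℛ_X^{(n)} - 𝒞ℛ_X| / a_n(P̄) ≤ ∑_{j=1}^{r-1} |1 + log P̄(x_j)| almost surely, where a_n(P̄) = max_{j∈[1,r-1]} |P̄_n(x_j) - P̄(x_j)|; in particular 𝒞ℛ_X^{(n)} → 𝒞ℛ_X a.s. -/

import Mathlib

/-!
By the strong law of large numbers for the indicators `1{X_i > x_j}`, each empirical survival
value `P̄_n(x_j)` converges a.s. to `P̄(x_j)`. As `t ↦ t log t` is differentiable at `P̄(x_j) > 0`,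
eventually `|P̄_n log P̄_n - P̄ log P̄| ≤ (|1 + log P̄| + ε) |P̄_n - P̄|` for each of the finitely
many `j`; summing and bounding every `|P̄_n(x_j) - P̄(x_j)|` by their maximum `a_n` gives the
limsup bound, and continuity of `t ↦ t log t` gives the convergence.
-/

open MeasureTheory ProbabilityTheory Filter Finset Real

open scoped Topology

/-- Empirical survival function at `t` of the first `n` observations. -/
noncomputable def empSurv {Ω : Type*} (X : ℕ → Ω → ℝ) (t : ℝ) (n : ℕ) (ω : Ω) : ℝ :=
  (∑ i ∈ Finset.range n, if t < X i ω then (1 : ℝ) else 0) / n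

lemma HasDerivAt.eventually_abs_sub_le {f : ℝ → ℝ} {f' p ε : ℝ} (hf : HasDerivAt f f' p)
    (hε : 0 < ε) : ∀ᶠ q in 𝓝 p, |f q - f p| ≤ (|f'| + ε) * |q - p| := by
  filter_upwards [hf.isLittleO.def hε] with q hq
  rw [Real.norm_eq_abs, Real.norm_eq_abs, smul_eq_mul] at hq
  calc |f q - f p| = |(f q - f p - (q - p) * f') + (q - p) * f'| := by ring_nf
    _ ≤ |f q - f p - (q - p) * f'| + |q - p| * |f'| := by rw [← abs_mul]; exact abs_add_le _ _
    _ ≤ (|f'| + ε) * |q - p| := by linarith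

section FiniteSum

variable {ι α : Type*} {l : Filter α} {S : Finset ι} (hS : S.Nonempty) {f : ℝ → ℝ}
  {d p : ι → ℝ} {q : ι → α → ℝ}

lemma eventually_abs_sum_sub_le_mul_sup' (hf : ∀ j ∈ S, HasDerivAt f (d j) (p j))
    (hq : ∀ j ∈ S, Tendsto (q j) l (𝓝 (p j))) {ε : ℝ} (hε : 0 < ε) :
    ∀ᶠ n in l, |∑ j ∈ S, f (q j n) - ∑ j ∈ S, f (p j)|
      ≤ (∑ j ∈ S, |d j| + ε) * S.sup' hS (fun j => |q j n - p j|) := by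
  have hcard : (0 : ℝ) < #S := by exact_mod_cast hS.card_pos
  have hε' : 0 < ε / #S := div_pos hε hcard
  have hloc : ∀ᶠ n in l, ∀ j ∈ S, |f (q j n) - f (p j)| ≤ (|d j| + ε / #S) * |q j n - p j| :=
    (eventually_all_finset S).2 fun j hj =>
      (hq j hj).eventually ((hf j hj).eventually_abs_sub_le hε')
  filter_upwards [hloc] with n hn
  calc |∑ j ∈ S, f (q j n) - ∑ j ∈ S, f (p j)|
      ≤ ∑ j ∈ S, |f (q j n) - f (p j)| := by rw [← sum_sub_distrib]; exact abs_sum_le_sum_abs _ _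
    _ ≤ ∑ j ∈ S, (|d j| + ε / #S) * S.sup' hS (fun j => |q j n - p j|) := by
        gcongr with j hj
        exact (hn j hj).trans (by gcongr; exact le_sup' (fun j => |q j n - p j|) hj)
    _ = (∑ j ∈ S, |d j| + ε) * S.sup' hS (fun j => |q j n - p j|) := by
        rw [← sum_mul, sum_add_distrib, sum_const, nsmul_eq_mul, mul_div_cancel₀ _ hcard.ne']

lemma limsup_abs_sum_sub_div_sup'_le [l.NeBot] (hf : ∀ j ∈ S, HasDerivAt f (d j) (p j))
    (hq : ∀ j ∈ S, Tendsto (q j) l (𝓝 (p j))) :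
    limsup (fun n => |∑ j ∈ S, f (q j n) - ∑ j ∈ S, f (p j)|
      / S.sup' hS (fun j => |q j n - p j|)) l ≤ ∑ j ∈ S, |d j| := by
  have hsup : ∀ n, 0 ≤ S.sup' hS (fun j => |q j n - p j|) := fun n =>
    le_sup'_of_le _ hS.choose_spec (abs_nonneg _)
  refine le_of_forall_pos_le_add fun ε hε => limsup_le_of_le
    (isCoboundedUnder_le_of_le l fun n => div_nonneg (abs_nonneg _) (hsup n)) ?_
  filter_upwards [eventually_abs_sum_sub_le_mul_sup' hS hf hq hε] with n hn
  exact div_le_of_le_mul₀ (hsup n) (by positivity) hn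

end FiniteSum

lemma ae_tendsto_empSurv {Ω : Type*} [MeasurableSpace Ω] {μ : Measure Ω} [IsFiniteMeasure μ]
    {X : ℕ → Ω → ℝ} (hindep : Pairwise fun i k => X i ⟂ᵢ[μ] X k)
    (hident : ∀ i, IdentDistrib (X i) (X 0) μ μ) (t : ℝ) :
    ∀ᵐ ω ∂μ, Tendsto (fun n => empSurv X t n ω) atTop (𝓝 (μ.real {ω | t < X 0 ω})) := by
  set g : ℝ → ℝ := (Set.Ioi t).indicator 1
  have hg : Measurable g := measurable_one.indicator measurableSet_Ioi
  have hset : NullMeasurableSet {ω | t < X 0 ω} μ :=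
    (hident 0).aemeasurable_fst.nullMeasurableSet_preimage measurableSet_Ioi
  have hY : g ∘ X 0 = {ω | t < X 0 ω}.indicator 1 := rfl
  have hint : Integrable (g ∘ X 0) μ := hY ▸ (integrable_const 1).indicator₀ hset
  have hmean : μ[g ∘ X 0] = μ.real {ω | t < X 0 ω} := by
    rw [hY, integral_indicator₀ hset, Pi.one_def, setIntegral_const, smul_eq_mul, mul_one]
  have hslln := strong_law_ae_real (fun i => g ∘ X i) hint
    (fun i k hik => (hindep hik).comp hg hg) (fun i => (hident i).comp hg)
  rw [hmean] at hslln
  filter_upwards [hslln] with ω hω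
  simpa [empSurv, g, Set.indicator_apply] using hω

theorem empirical_cumulative_residual_entropy_as_general
    {Ω : Type*} [MeasurableSpace Ω] (μ : Measure Ω) [IsProbabilityMeasure μ]
    (r : ℕ) (hr : 1 ≤ r - 1) (x : ℕ → ℝ)
    (X : ℕ → Ω → ℝ)
    (hmeas : ∀ i, Measurable (X i))
    (hindep : iIndepFun X μ)
    (hident : ∀ i, Measure.map (X i) μ = Measure.map (X 0) μ)
    (Pbar : ℕ → ℝ)
    (hsurv : ∀ j ∈ Finset.Icc 1 (r - 1), μ {ω | x j < X 0 ω} = ENNReal.ofReal (Pbar j))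
    (hpos : ∀ j ∈ Finset.Icc 1 (r - 1), 0 < Pbar j) :
    (∀ᵐ ω ∂μ,
      Filter.limsup
        (fun n =>
          |(-∑ j ∈ Finset.Icc 1 (r - 1),
              empSurv X (x j) n ω * Real.log (empSurv X (x j) n ω))
            - (-∑ j ∈ Finset.Icc 1 (r - 1), Pbar j * Real.log (Pbar j))|
          / ((Finset.Icc 1 (r - 1)).sup' (Finset.nonempty_Icc.mpr hr)
              (fun j => |empSurv X (x j) n ω - Pbar j|)))
        atTop
      ≤ ∑ j ∈ Finset.Icc 1 (r - 1), |1 + Real.log (Pbar j)|)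
    ∧ (∀ᵐ ω ∂μ,
        Tendsto
          (fun n =>
            -∑ j ∈ Finset.Icc 1 (r - 1),
              empSurv X (x j) n ω * Real.log (empSurv X (x j) n ω))
          atTop
          (nhds (-∑ j ∈ Finset.Icc 1 (r - 1), Pbar j * Real.log (Pbar j)))) := by
  have hiid : ∀ i, IdentDistrib (X i) (X 0) μ μ := fun i =>
    ⟨(hmeas i).aemeasurable, (hmeas 0).aemeasurable, hident i⟩
  have hlim : ∀ᵐ ω ∂μ, ∀ j ∈ Finset.Icc 1 (r - 1),
      Tendsto (fun n => empSurv X (x j) n ω) atTop (𝓝 (Pbar j)) := by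
    refine (eventually_all_finset _).2 fun j hj => ?_
    have hPbar : μ.real {ω | x j < X 0 ω} = Pbar j := by
      rw [measureReal_def, hsurv j hj, ENNReal.toReal_ofReal (hpos j hj).le]
    simpa only [hPbar] using ae_tendsto_empSurv (fun i k hik => hindep.indepFun hik) hiid (x j)
  have hderiv : ∀ j ∈ Finset.Icc 1 (r - 1),
      HasDerivAt (fun t => t * log t) (log (Pbar j) + 1) (Pbar j) := fun j hj =>
    hasDerivAt_mul_log (hpos j hj).ne'
  refine ⟨?_, ?_⟩
  · filter_upwards [hlim] with ω hω
    simp_rw [neg_sub_neg, abs_sub_comm (∑ j ∈ _, Pbar j * log (Pbar j)), add_comm (1 : ℝ)]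
    exact (limsup_abs_sum_sub_div_sup'_le (nonempty_Icc.mpr hr) hderiv hω :)
  · filter_upwards [hlim] with ω hω
    exact (tendsto_finsetSum _ fun j hj => (hderiv j hj).continuousAt.tendsto.comp (hω j hj)).neg

/-- almost sure convergence of the empirical cumulative residual entropy,
with `limsup |𝒞ℛ_X^{(n)} - 𝒞ℛ_X| / a_n(P̄) ≤ ∑_{j=1}^{r-1} |1 + log P̄(x_j)|` a.s.;
in particular `𝒞ℛ_X^{(n)} → 𝒞ℛ_X` a.s. -/
theorem empirical_cumulative_residual_entropy_as
    {Ω : Type*} [MeasurableSpace Ω] (μ : Measure Ω) [IsProbabilityMeasure μ]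
    (r : ℕ) (hr : 1 ≤ r - 1) (x : ℕ → ℝ) (hx : StrictMonoOn x (Set.Icc 1 r))
    (X : ℕ → Ω → ℝ)
    (hmeas : ∀ i, Measurable (X i))
    (hindep : iIndepFun X μ)
    (hident : ∀ i, Measure.map (X i) μ = Measure.map (X 0) μ)
    (Pbar : ℕ → ℝ)
    (hsurv : ∀ j ∈ Finset.Icc 1 (r - 1), μ {ω | x j < X 0 ω} = ENNReal.ofReal (Pbar j))
    (hpos : ∀ j ∈ Finset.Icc 1 (r - 1), 0 < Pbar j) :
    (∀ᵐ ω ∂μ,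
      Filter.limsup
        (fun n =>
          |(-∑ j ∈ Finset.Icc 1 (r - 1),
              empSurv X (x j) n ω * Real.log (empSurv X (x j) n ω))
            - (-∑ j ∈ Finset.Icc 1 (r - 1), Pbar j * Real.log (Pbar j))|
          / ((Finset.Icc 1 (r - 1)).sup' (Finset.nonempty_Icc.mpr hr)
              (fun j => |empSurv X (x j) n ω - Pbar j|)))
        atTop
      ≤ ∑ j ∈ Finset.Icc 1 (r - 1), |1 + Real.log (Pbar j)|)
    ∧ (∀ᵐ ω ∂μ,
        Tendsto
          (fun n =>
            -∑ j ∈ Finset.Icc 1 (r - 1),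
              empSurv X (x j) n ω * Real.log (empSurv X (x j) n ω))
          atTop
          (nhds (-∑ j ∈ Finset.Icc 1 (r - 1), Pbar j * Real.log (Pbar j)))) :=
  empirical_cumulative_residual_entropy_as_general μ r hr x X hmeas hindep hident Pbar hsurv hpos
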